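/- Let k be a field, V a k-vector space of dimension n+1 with n ≥ 4, and let A₁, A₂ be disjoint finite families of (n−1)-dimensional subspaces of V with |A₁| = a ≥ 2 and |A₂| = b ≥ 2, such that: (i) for all X ∈ A₁ and U ∈ A₂, dim(X ∩ U) = n−2, and (ii) for all distinct X, Y in the same family Aᵢ, dim(X ∩ Y) = n−3. Then the intersection of all members of A₁ ∪ A₂ is a subspace of dimension exactly n−3, and moreover ⋂A₁ = ⋂A₂ = X ∩ Y for any two distinct X, Y ∈ A₁. -/
import Mathlib

lemma aux_le {k : Type*} [Field k] {V : Type*} [AddCommGroup V] [Module k V]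
    [FiniteDimensional k V] {n : ℕ} (hn : 4 ≤ n) (X Y U : Submodule k V)
    (hU : Module.finrank k U = n - 1)
    (hXU : Module.finrank k ↥(X ⊓ U) = n - 2)
    (hYU : Module.finrank k ↥(Y ⊓ U) = n - 2)
    (hXY : Module.finrank k ↥(X ⊓ Y) = n - 3) : X ⊓ Y ≤ U := by
  have h1 : (X ⊓ U) ⊓ (Y ⊓ U) = (X ⊓ Y) ⊓ U := by
    rw [inf_assoc, inf_comm U (Y ⊓ U), inf_assoc, inf_idem, ← inf_assoc]
  have hsum := Submodule.finrank_sup_add_finrank_inf_eq (X ⊓ U) (Y ⊓ U)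
  have h2 : Module.finrank k ↥((X ⊓ U) ⊔ (Y ⊓ U)) ≤ n - 1 := by
    have hle : (X ⊓ U) ⊔ (Y ⊓ U) ≤ U := sup_le inf_le_right inf_le_right
    calc Module.finrank k ↥((X ⊓ U) ⊔ (Y ⊓ U)) ≤ Module.finrank k U :=
          Submodule.finrank_mono hle
      _ = n - 1 := hU
  have h3 : Module.finrank k ↥((X ⊓ Y) ⊓ U) ≤ n - 3 := by
    calc Module.finrank k ↥((X ⊓ Y) ⊓ U) ≤ Module.finrank k ↥(X ⊓ Y) :=
          Submodule.finrank_mono inf_le_left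
      _ = n - 3 := hXY
  rw [h1] at hsum
  have h4 : Module.finrank k ↥((X ⊓ Y) ⊓ U) = n - 3 := by omega
  have h5 : (X ⊓ Y) ⊓ U = X ⊓ Y :=
    Submodule.eq_of_le_of_finrank_eq inf_le_left (by rw [h4, hXY])
  rw [← h5]
  exact inf_le_right

theorem stmt_1 (k : Type*) [Field k] (V : Type*) [AddCommGroup V] [Module k V]
    [FiniteDimensional k V] [DecidableEq (Submodule k V)] (n : ℕ) (hn : 4 ≤ n) (hV : Module.finrank k V = n + 1)
    (A₁ A₂ : Finset (Submodule k V)) (hdisj : Disjoint A₁ A₂)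
    (a b : ℕ) (ha : 2 ≤ a) (hb : 2 ≤ b) (hcard₁ : A₁.card = a) (hcard₂ : A₂.card = b)
    (hdim : ∀ X ∈ A₁ ∪ A₂, Module.finrank k X = n - 1)
    (hcross : ∀ X ∈ A₁, ∀ U ∈ A₂, Module.finrank k ↥(X ⊓ U) = n - 2)
    (hsame₁ : ∀ X ∈ A₁, ∀ Y ∈ A₁, X ≠ Y → Module.finrank k ↥(X ⊓ Y) = n - 3)
    (hsame₂ : ∀ X ∈ A₂, ∀ Y ∈ A₂, X ≠ Y → Module.finrank k ↥(X ⊓ Y) = n - 3) :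
    Module.finrank k ↥((A₁ ∪ A₂).inf id) = n - 3 ∧
    ∀ X ∈ A₁, ∀ Y ∈ A₁, X ≠ Y →
      A₁.inf id = X ⊓ Y ∧ A₂.inf id = X ⊓ Y := by
  -- L1 : X⊓Y ≤ U for X ≠ Y in A₁, U ∈ A₂
  have L1 : ∀ X ∈ A₁, ∀ Y ∈ A₁, X ≠ Y → ∀ U ∈ A₂, X ⊓ Y ≤ U := by
    intro X hX Y hY hXY U hU
    exact aux_le hn X Y U (hdim U (Finset.mem_union_right _ hU))
      (hcross X hX U hU) (hcross Y hY U hU) (hsame₁ X hX Y hY hXY)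
  -- L2 : U⊓W ≤ X for U ≠ W in A₂, X ∈ A₁
  have L2 : ∀ U ∈ A₂, ∀ W ∈ A₂, U ≠ W → ∀ X ∈ A₁, U ⊓ W ≤ X := by
    intro U hU W hW hUW X hX
    refine aux_le hn U W X (hdim X (Finset.mem_union_left _ hX)) ?_ ?_
      (hsame₂ U hU W hW hUW)
    · rw [inf_comm]; exact hcross X hX U hU
    · rw [inf_comm]; exact hcross X hX W hW
  -- pick distinct elements
  obtain ⟨U, hU, W, hW, hUW⟩ := Finset.one_lt_card.mp (by omega : 1 < A₂.card)
  obtain ⟨X₀, hX₀, Y₀, hY₀, hXY₀⟩ := Finset.one_lt_card.mp (by omega : 1 < A₁.card)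
  -- any X⊓Y equals U⊓W
  have key : ∀ X ∈ A₁, ∀ Y ∈ A₁, X ≠ Y → X ⊓ Y = U ⊓ W := by
    intro X hX Y hY hXY
    have h1 : X ⊓ Y ≤ U ⊓ W := le_inf (L1 X hX Y hY hXY U hU) (L1 X hX Y hY hXY W hW)
    exact Submodule.eq_of_le_of_finrank_eq h1
      (by rw [hsame₁ X hX Y hY hXY, hsame₂ U hU W hW hUW])
  have main : ∀ X ∈ A₁, ∀ Y ∈ A₁, X ≠ Y →
      A₁.inf id = X ⊓ Y ∧ A₂.inf id = X ⊓ Y := by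
    intro X hX Y hY hXY
    constructor
    · refine le_antisymm (le_inf (Finset.inf_le hX) (Finset.inf_le hY)) ?_
      refine Finset.le_inf fun Z hZ => ?_
      rcases eq_or_ne X Z with rfl | hXZ
      · exact inf_le_left
      rcases eq_or_ne Y Z with rfl | hYZ
      · exact inf_le_right
      rw [key X hX Y hY hXY]
      exact L2 U hU W hW hUW Z hZ
    · refine le_antisymm ?_ (Finset.le_inf fun Z hZ => L1 X hX Y hY hXY Z hZ)
      rw [key X hX Y hY hXY]
      exact le_inf (Finset.inf_le hU) (Finset.inf_le hW)
  refine ⟨?_, main⟩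
  have h1 := main X₀ hX₀ Y₀ hY₀ hXY₀
  rw [Finset.inf_union, h1.1, h1.2, inf_idem]
  exact hsame₁ X₀ hX₀ Y₀ hY₀ hXY₀
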